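/- Let A = K[x_1,...,x_d] be a polynomial ring over a field K with maximal ideal m = (x_1,...,x_d). For every ε > 0 there exists N > 0 such that for any m-primary monomial ideal J whose order (the largest n with J ⊆ m^n) is at least N, the minimal number of generators μ(J) satisfies μ(J) < ε · length(A/J). -/

import Mathlib

open IsLocalRing Filter

/-- Length of a module (as a natural number): the Krull dimension of its submodule lattice. -/
noncomputable def flength (R M : Type*) [Ring R] [AddCommGroup M] [Module R M] : ℕ :=
  (WithBot.unbotD 0 (Order.krullDim (Submodule R M))).toNat

/-- Minimal number of generators of a submodule. -/
noncomputable def mu (R : Type*) {M : Type*} [Ring R] [AddCommGroup M] [Module R M]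
    (N : Submodule R M) : ℕ :=
  sInf {n | ∃ s : Finset M, s.card = n ∧ Submodule.span R (s : Set M) = N}

/-- Hilbert–Samuel multiplicity of an ideal in a `d`-dimensional local ring. -/
noncomputable def eMult (R : Type*) [CommRing R] (d : ℕ) (I : Ideal R) : ℝ :=
  Filter.limsup
    (fun n : ℕ => (d.factorial : ℝ) * (flength R (R ⧸ I ^ n) : ℝ) / (n : ℝ) ^ d)
    Filter.atTop

/-- An ideal of a local ring is `m`-primary. -/
def IsMPrimary (R : Type*) [CommRing R] [IsLocalRing R] (I : Ideal R) : Prop :=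
  I ≠ ⊤ ∧ ∃ k : ℕ, maximalIdeal R ^ k ≤ I

/-- A commutative ring is regular local. -/
def IsRegularLocal (A : Type*) [CommRing A] : Prop :=
  IsNoetherianRing A ∧ ∃ _ : IsLocalRing A,
    ringKrullDim A = (mu A (IsLocalRing.maximalIdeal A) : WithBot ℕ∞)

/-- Length of `J/I` for ideals `I ≤ J`. -/
noncomputable def qlen (R : Type*) [CommRing R] (I J : Ideal R) : ℕ :=
  flength R (Submodule.map (Submodule.mkQ (I : Submodule R R)) (J : Submodule R R))


/-!
Write `J = (x^u : u ∈ U)` with `U` an upper set of exponents; its complement, the set of standard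
monomials, is finite because `J` is `m`-primary. Adjoining the standard monomials to `J` one at a
time, a maximal one first, gives a strictly increasing chain of ideals from `J` to `A`, so
`ℓ(A/J) ≥ #Uᶜ`; and `μ(J)` is at most the number of minimal elements of `U`. If `ord J > d Q`,
every minimal exponent `g` has a coordinate `g i > Q`, and the `Q` exponents `g - (k+1) eᵢ` are
standard. Since the minimal exponents form an antichain, `(g, k) ↦ (g - (k+1) eᵢ, i)` is injective,
whence `μ(J) Q ≤ d ℓ(A/J)`, and `Q > d / ε` gives the claim.
-/

open Finsupp

lemma flength_eq_toNat_length (R M : Type*) [Ring R] [AddCommGroup M] [Module R M] :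
    flength R M = (Module.length R M).toNat := by
  rw [flength, ← Module.coe_length, WithBot.unbotD_coe]

lemma mu_span_le_ncard {R M : Type*} [Ring R] [AddCommGroup M] [Module R M] {s : Set M}
    (hs : s.Finite) : mu R (Submodule.span R s) ≤ s.ncard :=
  Nat.sInf_le ⟨hs.toFinset, (Set.ncard_eq_toFinset_card s hs).symm, by simp⟩

lemma upperClosure_setOf_minimal {α : Type*} [Preorder α] [WellFoundedLT α] (S : Set α) :
    upperClosure {g | Minimal (· ∈ S) g} = upperClosure S := by
  ext x
  simp only [SetLike.mem_coe, mem_upperClosure, Set.mem_ofPred_eq]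
  refine ⟨fun ⟨g, hg, hgx⟩ => ⟨g, hg.prop, hgx⟩, fun ⟨s, hs, hsx⟩ => ?_⟩
  obtain ⟨g, hgs, hg⟩ := exists_minimal_le_of_wellFoundedLT _ s hs
  exact ⟨g, hg, hgs.trans hsx⟩

lemma IsUpperSet.insert_of_maximal_compl {α : Type*} [PartialOrder α] {U : Set α}
    (hU : IsUpperSet U) {t : α} (ht : Maximal (· ∈ Uᶜ) t) : IsUpperSet (insert t U) := by
  rintro a b hab (rfl | ha)
  · by_cases hb : b ∈ U
    · exact Or.inr hb
    · exact Or.inl (le_antisymm (ht.2 hb hab) hab)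
  · exact Or.inr (hU hab ha)

namespace Finsupp

variable {σ : Type*} [Fintype σ]

lemma exists_lt_apply_of_card_mul_lt_degree {Q : ℕ} {f : σ →₀ ℕ}
    (h : Fintype.card σ * Q < f.degree) : ∃ i, Q < f i := by
  rw [degree_eq_sum] at h
  obtain ⟨i, -, hi⟩ := Finset.exists_lt_of_sum_lt (s := Finset.univ) (f := fun _ => Q)
    (by simpa using h)
  exact ⟨i, hi⟩

theorem ncard_mul_le_ncard_compl_mul {E G : Set (σ →₀ ℕ)} (hE : Eᶜ.Finite) {Q : ℕ}
    (hG : ∀ g ∈ G, Minimal (· ∈ E) g ∧ Fintype.card σ * Q < g.degree) :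
    G.ncard * Q ≤ Eᶜ.ncard * Fintype.card σ := by
  rcases G.eq_empty_or_nonempty with rfl | ⟨g₀, hg₀⟩
  · simp
  have : Nonempty σ := ⟨(exists_lt_apply_of_card_mul_lt_degree (hG g₀ hg₀).2).choose⟩
  choose! i hi using fun g hg => exists_lt_apply_of_card_mul_lt_degree (hG g hg).2
  have hcancel : ∀ g ∈ G, ∀ k < Q, g - single (i g) (k + 1) + single (i g) (k + 1) = g :=
    fun g hg k hk => tsub_add_cancel_of_le <| by rw [single_le_iff]; have := hi g hg; omega
  let f : (σ →₀ ℕ) × ℕ → (σ →₀ ℕ) × σ := fun p => (p.1 - single (i p.1) (p.2 + 1), i p.1)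
  have hmaps : ∀ p ∈ G ×ˢ (Finset.range Q : Set ℕ), f p ∈ Eᶜ ×ˢ (Set.univ : Set σ) := by
    rintro ⟨g, k⟩ ⟨hg, hk⟩
    refine ⟨(hG g hg).1.not_prop_of_lt ?_, trivial⟩
    conv_rhs => rw [← hcancel g hg k (by simpa using hk)]
    exact lt_add_of_pos_right _ (pos_iff_ne_zero.mpr (single_ne_zero.mpr k.succ_ne_zero))
  have hinj : Set.InjOn f (G ×ˢ (Finset.range Q : Set ℕ)) := by
    rintro ⟨g, k⟩ ⟨hg, hk⟩ ⟨g', k'⟩ ⟨hg', hk'⟩ h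
    simp only [Finset.coe_range, Set.mem_Iio] at hk hk'
    obtain ⟨ht, hj⟩ := Prod.mk.inj h
    have hg₁ := hcancel g hg k hk
    have hg₂ := hcancel g' hg' k' hk'
    rw [← ht, ← hj] at hg₂
    have hgg : g = g' := by
      rcases le_total k k' with hkk | hkk
      · refine (hG g' hg').1.eq_of_le (hG g hg).1.prop ?_
        rw [← hg₁, ← hg₂]; gcongr
      · refine ((hG g hg).1.eq_of_le (hG g' hg').1.prop ?_).symm
        rw [← hg₁, ← hg₂]; gcongr
    subst hgg
    have := single_injective _ (add_left_cancel (hg₁.trans hg₂.symm))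
    simp only [Prod.mk.injEq, true_and]
    omega
  simpa [Set.ncard_prod] using Set.ncard_le_ncard_of_injOn f hmaps hinj (hE.prod Set.finite_univ)

end Finsupp

namespace MvPolynomial

variable {σ R K : Type*}

section CommSemiring

variable [CommSemiring R]

lemma span_monomial_image_eq_of_upperClosure_eq {S S' : Set (σ →₀ ℕ)}
    (h : upperClosure S = upperClosure S') :
    Ideal.span ((monomial · (1 : R)) '' S) = Ideal.span ((monomial · (1 : R)) '' S') := by
  ext x
  simp only [mem_ideal_span_monomial_image, ← mem_upperClosure, h]

variable [Nontrivial R]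

lemma monomial_mem_span_monomial_image_iff {U : Set (σ →₀ ℕ)} (hU : IsUpperSet U)
    {t : σ →₀ ℕ} : monomial t (1 : R) ∈ Ideal.span ((monomial · (1 : R)) '' U) ↔ t ∈ U := by
  classical
  simp only [mem_ideal_span_monomial_image, support_monomial, one_ne_zero, if_false,
    Finset.mem_singleton, forall_eq]
  exact ⟨fun ⟨s, hs, hst⟩ => hU hst hs, fun ht => ⟨t, ht, le_rfl⟩⟩

lemma compl_subset_setOf_degree_lt {U : Set (σ →₀ ℕ)} (hU : IsUpperSet U) {k : ℕ}
    (hk : idealOfVars σ R ^ k ≤ Ideal.span ((monomial · (1 : R)) '' U)) :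
    Uᶜ ⊆ {t | t.degree < k} := fun t ht => not_le.mp fun h => ht <|
  (monomial_mem_span_monomial_image_iff hU).mp
    (hk ((monomial_mem_pow_idealOfVars_iff k t one_ne_zero).mpr h))

lemma le_degree_of_span_monomial_image_le {S : Set (σ →₀ ℕ)} {n : ℕ}
    (h : Ideal.span ((monomial · (1 : R)) '' S) ≤ idealOfVars σ R ^ n) {t : σ →₀ ℕ}
    (ht : t ∈ S) : n ≤ t.degree :=
  (monomial_mem_pow_idealOfVars_iff n t one_ne_zero).mp (h (Ideal.subset_span ⟨t, ht, rfl⟩))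

theorem ncard_compl_le_coheight_span_monomial_image {U : Set (σ →₀ ℕ)} (hU : IsUpperSet U)
    (hfin : Uᶜ.Finite) :
    (Uᶜ.ncard : ℕ∞) ≤ Order.coheight (Ideal.span ((monomial · (1 : R)) '' U)) := by
  induction hn : Uᶜ.ncard generalizing U with
  | zero => simp
  | succ n ih =>
    obtain ⟨t, ht⟩ := hfin.exists_maximal (Set.nonempty_of_ncard_ne_zero (by omega))
    have hU' := hU.insert_of_maximal_compl ht
    have hcompl : (insert t U)ᶜ = Uᶜ \ {t} := by
      rw [Set.insert_eq, Set.compl_union, Set.sdiff_eq, Set.inter_comm]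
    have hlt : Ideal.span ((monomial · (1 : R)) '' U) <
        Ideal.span ((monomial · (1 : R)) '' insert t U) := by
      refine lt_of_le_of_ne (Ideal.span_mono (Set.image_mono (Set.subset_insert t U))) fun h => ?_
      have := (monomial_mem_span_monomial_image_iff (R := R) hU').mpr (Set.mem_insert t U)
      exact ht.1 ((monomial_mem_span_monomial_image_iff hU).mp (h ▸ this))
    calc ((n + 1 : ℕ) : ℕ∞)
        ≤ Order.coheight (Ideal.span ((monomial · (1 : R)) '' insert t U)) + 1 := by
          push_cast
          gcongr
          refine ih hU' (hcompl ▸ hfin.sdiff) ?_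
          rw [hcompl, Set.ncard_sdiff_singleton_of_mem ht.1, hn, Nat.add_sub_cancel]
      _ ≤ _ := Order.coheight_add_one_le hlt

end CommSemiring

theorem mu_span_monomial_image_le [CommRing R] [Finite σ] (S : Set (σ →₀ ℕ)) :
    mu (MvPolynomial σ R) (Ideal.span ((monomial · (1 : R)) '' S)) ≤
      {g | Minimal (· ∈ S) g}.ncard := by
  have hfin := WellQuasiOrderedLE.finite_of_isAntichain (setOfPred_minimal_antichain (· ∈ S))
  rw [← span_monomial_image_eq_of_upperClosure_eq (upperClosure_setOf_minimal S)]
  exact (mu_span_le_ncard (hfin.image _)).trans (Set.ncard_image_le hfin)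

section Field

variable [Field K]

theorem finiteDimensional_quotient_span_monomial_image {S : Set (σ →₀ ℕ)} (hS : Sᶜ.Finite) :
    FiniteDimensional K (MvPolynomial σ K ⧸ Ideal.span ((monomial · (1 : K)) '' S)) := by
  set J := Ideal.span ((monomial · (1 : K)) '' S)
  let π := (Ideal.Quotient.mkₐ K J).toLinearMap
  refine ⟨⟨(hS.image fun t => π (monomial t 1)).toFinset, ?_⟩⟩
  rw [Set.Finite.coe_toFinset, eq_top_iff,
    ← (LinearMap.range_eq_top (f := π)).mpr (Ideal.Quotient.mkₐ_surjective K J),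
    LinearMap.range_eq_map, ← (basisMonomials σ K).span_eq, Submodule.map_span, Submodule.span_le]
  rintro _ ⟨_, ⟨t, rfl⟩, rfl⟩
  by_cases ht : t ∈ S
  · have : Ideal.Quotient.mk J (monomial t 1) = 0 :=
      Ideal.Quotient.eq_zero_iff_mem.mpr (Ideal.subset_span ⟨t, ht, rfl⟩)
    simp [π, this]
  · exact Submodule.subset_span ⟨t, ht, by simp [π]⟩

theorem ncard_compl_le_flength_quotient {U : Set (σ →₀ ℕ)} (hU : IsUpperSet U)
    (hfin : Uᶜ.Finite) :
    Uᶜ.ncard ≤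
      flength (MvPolynomial σ K) (MvPolynomial σ K ⧸ Ideal.span ((monomial · (1 : K)) '' U)) := by
  set J := Ideal.span ((monomial · (1 : K)) '' U)
  have := finiteDimensional_quotient_span_monomial_image (K := K) hfin
  have : IsArtinian (MvPolynomial σ K) (MvPolynomial σ K ⧸ J) :=
    isArtinian_of_tower K inferInstance
  have : IsNoetherian (MvPolynomial σ K) (MvPolynomial σ K ⧸ J) :=
    isNoetherian_of_tower K inferInstance
  rw [flength_eq_toNat_length, ← ENat.toNat_natCast Uᶜ.ncard, Module.length_quotient]
  exact ENat.toNat_le_toNat (ncard_compl_le_coheight_span_monomial_image hU hfin)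
    (Module.length_quotient (N := J) ▸ Module.length_ne_top)

theorem mu_mul_le_flength_mul [Fintype σ] {U : Set (σ →₀ ℕ)} (hU : IsUpperSet U)
    (hfin : Uᶜ.Finite) {Q : ℕ}
    (hord : Ideal.span ((monomial · (1 : K)) '' U) ≤ idealOfVars σ K ^ (Fintype.card σ * Q + 1)) :
    mu (MvPolynomial σ K) (Ideal.span ((monomial · (1 : K)) '' U)) * Q ≤
      flength (MvPolynomial σ K) (MvPolynomial σ K ⧸ Ideal.span ((monomial · (1 : K)) '' U)) *
        Fintype.card σ := by
  calc _ ≤ {g | Minimal (· ∈ U) g}.ncard * Q := by gcongr; exact mu_span_monomial_image_le U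
    _ ≤ Uᶜ.ncard * Fintype.card σ := ncard_mul_le_ncard_compl_mul hfin fun g hg =>
        ⟨hg, le_degree_of_span_monomial_image_le hord hg.prop⟩
    _ ≤ _ := by gcongr; exact ncard_compl_le_flength_quotient hU hfin

end Field

end MvPolynomial

open MvPolynomial

/-- monomial ideals of large order in a polynomial ring have few
generators compared to colength. -/
theorem stmt_0 (K : Type*) [Field K] (d : ℕ) (ε : ℝ) (hε : 0 < ε) :
    ∃ N : ℕ, 0 < N ∧ ∀ J : Ideal (MvPolynomial (Fin d) K),
      -- `J` is a monomial ideal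
      (∃ S : Set (Fin d →₀ ℕ),
        J = Ideal.span ((fun s => MvPolynomial.monomial s (1 : K)) '' S)) →
      -- `J` is `m`-primary
      J ≠ ⊤ →
      (∃ k : ℕ,
        (Ideal.span (Set.range (MvPolynomial.X : Fin d → MvPolynomial (Fin d) K))) ^ k ≤ J) →
      -- `ord J ≥ N`, i.e. `J ⊆ m^N`
      J ≤ (Ideal.span (Set.range (MvPolynomial.X : Fin d → MvPolynomial (Fin d) K))) ^ N →
      (mu (MvPolynomial (Fin d) K) (J : Submodule (MvPolynomial (Fin d) K) (MvPolynomial (Fin d) K)) : ℝ) <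
        ε * (flength (MvPolynomial (Fin d) K) (MvPolynomial (Fin d) K ⧸ J) : ℝ) := by
  obtain ⟨Q, hQ⟩ := exists_nat_gt (d / ε)
  rw [div_lt_iff₀ hε] at hQ
  refine ⟨d * Q + 1, Nat.succ_pos _, ?_⟩
  rintro _ ⟨S, rfl⟩ hJ ⟨k, hk⟩ hord
  set U : Set (Fin d →₀ ℕ) := ↑(upperClosure S)
  have hU : IsUpperSet U := (upperClosure S).upper
  rw [← span_monomial_image_eq_of_upperClosure_eq (UpperSet.upperClosure (upperClosure S))]
    at hJ hk hord ⊢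
  have hfin : Uᶜ.Finite := (finite_of_degree_lt k).subset (compl_subset_setOf_degree_lt hU hk)
  have hzero : 0 ∈ Uᶜ := fun h0 =>
    hJ ((Ideal.eq_top_iff_one _).mpr ((monomial_mem_span_monomial_image_iff hU).mpr h0))
  have hlen : (0 : ℝ) < _ := Nat.cast_pos.mpr <| (Set.ncard_pos hfin).mpr ⟨0, hzero⟩ |>.trans_le
    (ncard_compl_le_flength_quotient (K := K) hU hfin)
  have hkey := mu_mul_le_flength_mul hU hfin (Q := Q) (by simpa using hord)
  rw [Fintype.card_fin] at hkey
  have hkey' : (_ : ℝ) ≤ _ := Nat.cast_le.mpr hkey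
  push_cast at hkey'
  nlinarith
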